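/- arXiv:1403.2928 — 5 statements merged into one kernel-verified Lean document; each statement's English description precedes it below -/
import Mathlib

section
/- The monoid of 2×2 matrices with non-negative integer entries and determinant 1 is freely generated by the matrices L = [[1,0],[1,1]] and R = [[1,1],[0,1]]: every such matrix is a product of L's and R's in exactly one way. -/
open Matrix

def SL2N (M : Matrix (Fin 2) (Fin 2) ℤ) : Prop :=
  (∀ i j, 0 ≤ M i j) ∧ M.det = 1

def Lmat : Matrix (Fin 2) (Fin 2) ℤ := !![1, 0; 1, 1]

def Rmat : Matrix (Fin 2) (Fin 2) ℤ := !![1, 1; 0, 1]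

def matOf (w : List Bool) : Matrix (Fin 2) (Fin 2) ℤ :=
  w.foldl (fun acc b => (if b then Rmat else Lmat) * acc) 1

lemma matOf_nil : matOf [] = 1 := rfl

lemma matOf_append_singleton (w : List Bool) (b : Bool) :
    matOf (w ++ [b]) = (if b then Rmat else Lmat) * matOf w := by
  simp [matOf, List.foldl_append]

lemma SL2N_of (a b c d : ℤ) (ha : 0 ≤ a) (hb : 0 ≤ b) (hc : 0 ≤ c) (hd : 0 ≤ d)
    (hdet : a * d - b * c = 1) : SL2N !![a, b; c, d] := by
  constructor
  · intro i j; fin_cases i <;> fin_cases j <;> simpa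
  · simp [Matrix.det_fin_two_of]; linarith

lemma SL2N_elim (a b c d : ℤ) (h : SL2N !![a, b; c, d]) :
    0 ≤ a ∧ 0 ≤ b ∧ 0 ≤ c ∧ 0 ≤ d ∧ a * d - b * c = 1 := by
  obtain ⟨hpos, hdet⟩ := h
  simp [Matrix.det_fin_two_of] at hdet
  exact ⟨hpos 0 0, hpos 0 1, hpos 1 0, hpos 1 1, by linarith⟩

lemma Rmat_mul (a b c d : ℤ) : Rmat * !![a, b; c, d] = !![a + c, b + d; c, d] := by
  simp [Rmat, Matrix.mul_fin_two]

lemma Lmat_mul (a b c d : ℤ) : Lmat * !![a, b; c, d] = !![a, b; a + c, b + d] := by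
  simp [Lmat, Matrix.mul_fin_two]

lemma mat_eq_elim {a b c d a' b' c' d' : ℤ}
    (h : !![a, b; c, d] = !![a', b'; c', d']) :
    a = a' ∧ b = b' ∧ c = c' ∧ d = d' :=
  ⟨by simpa using congrFun (congrFun h 0) 0, by simpa using congrFun (congrFun h 0) 1,
   by simpa using congrFun (congrFun h 1) 0, by simpa using congrFun (congrFun h 1) 1⟩

lemma SL2N_matOf (w : List Bool) : SL2N (matOf w) := by
  induction w using List.reverseRecOn with
  | nil =>
    rw [matOf_nil]
    refine ⟨fun i j => ?_, Matrix.det_one⟩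
    fin_cases i <;> fin_cases j <;> simp [Matrix.one_apply]
  | append_singleton w b ih =>
    rw [matOf_append_singleton]
    rw [Matrix.eta_fin_two (matOf w)] at ih ⊢
    obtain ⟨ha, hb, hc, hd, hdet⟩ := SL2N_elim _ _ _ _ ih
    cases b with
    | false =>
      rw [if_neg Bool.false_ne_true, Lmat_mul]
      exact SL2N_of _ _ _ _ ha hb (by linarith) (by linarith) (by linarith)
    | true =>
      rw [if_pos rfl, Rmat_mul]
      exact SL2N_of _ _ _ _ (by linarith) (by linarith) hc hd (by linarith)

lemma R_cancel {X Y : Matrix (Fin 2) (Fin 2) ℤ} (h : Rmat * X = Rmat * Y) : X = Y := by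
  have hinv : (!![1, -1; 0, 1] : Matrix (Fin 2) (Fin 2) ℤ) * Rmat = 1 := by
    simp [Rmat, Matrix.mul_fin_two, Matrix.one_fin_two]
  calc X = (!![1, -1; 0, 1] * Rmat) * X := by rw [hinv, one_mul]
    _ = (!![1, -1; 0, 1] * Rmat) * Y := by rw [mul_assoc, h, mul_assoc]
    _ = Y := by rw [hinv, one_mul]

lemma L_cancel {X Y : Matrix (Fin 2) (Fin 2) ℤ} (h : Lmat * X = Lmat * Y) : X = Y := by
  have hinv : (!![1, 0; -1, 1] : Matrix (Fin 2) (Fin 2) ℤ) * Lmat = 1 := by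
    simp [Lmat, Matrix.mul_fin_two, Matrix.one_fin_two]
  calc X = (!![1, 0; -1, 1] * Lmat) * X := by rw [hinv, one_mul]
    _ = (!![1, 0; -1, 1] * Lmat) * Y := by rw [mul_assoc, h, mul_assoc]
    _ = Y := by rw [hinv, one_mul]

lemma R_mul_ne_one {X : Matrix (Fin 2) (Fin 2) ℤ} (hX : SL2N X) : Rmat * X ≠ 1 := by
  rw [Matrix.eta_fin_two X] at hX ⊢
  obtain ⟨ha, hb, hc, hd, hdet⟩ := SL2N_elim _ _ _ _ hX
  rw [Rmat_mul, Matrix.one_fin_two]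
  intro h
  obtain ⟨h1, h2, h3, h4⟩ := mat_eq_elim h
  nlinarith

lemma L_mul_ne_one {X : Matrix (Fin 2) (Fin 2) ℤ} (hX : SL2N X) : Lmat * X ≠ 1 := by
  rw [Matrix.eta_fin_two X] at hX ⊢
  obtain ⟨ha, hb, hc, hd, hdet⟩ := SL2N_elim _ _ _ _ hX
  rw [Lmat_mul, Matrix.one_fin_two]
  intro h
  obtain ⟨h1, h2, h3, h4⟩ := mat_eq_elim h
  nlinarith

lemma R_mul_ne_L_mul {X Y : Matrix (Fin 2) (Fin 2) ℤ} (hX : SL2N X) (hY : SL2N Y) :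
    Rmat * X ≠ Lmat * Y := by
  rw [Matrix.eta_fin_two X] at hX ⊢
  rw [Matrix.eta_fin_two Y] at hY ⊢
  obtain ⟨ha, hb, hc, hd, hdet⟩ := SL2N_elim _ _ _ _ hX
  obtain ⟨ha', hb', hc', hd', hdet'⟩ := SL2N_elim _ _ _ _ hY
  rw [Rmat_mul, Lmat_mul]
  intro h
  obtain ⟨h1, h2, h3, h4⟩ := mat_eq_elim h
  have e1 : X 0 0 = 0 := by linarith
  have e2 : X 0 1 = 0 := by linarith
  rw [e1, e2] at hdet
  nlinarith

lemma matOf_injective : Function.Injective matOf := by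
  intro w₁
  induction w₁ using List.reverseRecOn with
  | nil =>
    intro w₂ h
    induction w₂ using List.reverseRecOn with
    | nil => rfl
    | append_singleton w₂ b _ =>
      rw [matOf_nil, matOf_append_singleton] at h
      exfalso
      cases b with
      | false => rw [if_neg Bool.false_ne_true] at h; exact L_mul_ne_one (SL2N_matOf w₂) h.symm
      | true => rw [if_pos rfl] at h; exact R_mul_ne_one (SL2N_matOf w₂) h.symm
  | append_singleton w₁ b ih =>
    intro w₂ h
    induction w₂ using List.reverseRecOn with
    | nil =>
      rw [matOf_nil, matOf_append_singleton] at h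
      exfalso
      cases b with
      | false => rw [if_neg Bool.false_ne_true] at h; exact L_mul_ne_one (SL2N_matOf w₁) h
      | true => rw [if_pos rfl] at h; exact R_mul_ne_one (SL2N_matOf w₁) h
    | append_singleton w₂ b' _ =>
      rw [matOf_append_singleton, matOf_append_singleton] at h
      cases b with
      | false =>
        cases b' with
        | false =>
          rw [if_neg Bool.false_ne_true] at h
          rw [ih (L_cancel h)]
        | true =>
          rw [if_neg Bool.false_ne_true, if_pos rfl] at h
          exact absurd h.symm (R_mul_ne_L_mul (SL2N_matOf w₂) (SL2N_matOf w₁))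
      | true =>
        cases b' with
        | false =>
          rw [if_pos rfl, if_neg Bool.false_ne_true] at h
          exact absurd h (R_mul_ne_L_mul (SL2N_matOf w₁) (SL2N_matOf w₂))
        | true =>
          rw [if_pos rfl] at h
          rw [ih (R_cancel h)]

lemma exists_word : ∀ n : ℕ, ∀ a b c d : ℤ, 0 ≤ a → 0 ≤ b → 0 ≤ c → 0 ≤ d →
    a * d - b * c = 1 → (a + b + c + d).toNat ≤ n → ∃ w, matOf w = !![a, b; c, d] := by
  intro n
  induction n with
  | zero =>
    intro a b c d ha hb hc hd hdet hs
    exfalso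
    have h0 : a = 0 ∧ b = 0 ∧ c = 0 ∧ d = 0 := by omega
    obtain ⟨rfl, rfl, rfl, rfl⟩ := h0
    norm_num at hdet
  | succ n ih =>
    intro a b c d ha hb hc hd hdet hs
    by_cases hone : a = 1 ∧ b = 0 ∧ c = 0 ∧ d = 1
    · obtain ⟨rfl, rfl, rfl, rfl⟩ := hone
      exact ⟨[], by rw [matOf_nil, Matrix.one_fin_two]⟩
    · by_cases h1 : c ≤ a ∧ d ≤ b
      · obtain ⟨hca, hdb⟩ := h1
        have hcd : 0 < c + d := by
          rcases lt_or_ge 0 (c + d) with h | h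
          · exact h
          · exfalso
            have hc0 : c = 0 := by omega
            have hd0 : d = 0 := by omega
            rw [hc0, hd0] at hdet; norm_num at hdet
        obtain ⟨w, hw⟩ := ih (a - c) (b - d) c d (by linarith) (by linarith) hc hd
          (by linear_combination hdet) (by omega)
        refine ⟨w ++ [true], ?_⟩
        rw [matOf_append_singleton, if_pos rfl, hw, Rmat_mul,
          show a - c + c = a from by ring, show b - d + d = b from by ring]
      · -- show a ≤ c ∧ b ≤ d
        have h2 : a ≤ c ∧ b ≤ d := by
          constructor
          · by_contra hca; push_neg at hca
            have hbd : b < d := by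
              by_contra hdb; push_neg at hdb
              exact h1 ⟨hca.le, hdb⟩
            -- a ≥ c+1, d ≥ b+1, det = 1 ⟹ b + c ≤ 0 ⟹ b = c = 0 ⟹ a = d = 1
            have hbc : b + c ≤ 0 := by nlinarith
            have hb0 : b = 0 := by omega
            have hc0 : c = 0 := by omega
            rw [hb0, hc0] at hdet
            have ha1 : a = 1 := by nlinarith
            have hd1 : d = 1 := by nlinarith
            exact hone ⟨ha1, hb0, hc0, hd1⟩
          · by_contra hdb; push_neg at hdb
            have hac : a < c := by
              by_contra hca; push_neg at hca
              exact h1 ⟨hca, hdb.le⟩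
            nlinarith
        obtain ⟨hac, hbd⟩ := h2
        have hab : 0 < a + b := by
          rcases lt_or_ge 0 (a + b) with h | h
          · exact h
          · exfalso
            have ha0 : a = 0 := by omega
            have hb0 : b = 0 := by omega
            rw [ha0, hb0] at hdet; norm_num at hdet
        obtain ⟨w, hw⟩ := ih a b (c - a) (d - b) ha hb (by linarith) (by linarith)
          (by linear_combination hdet) (by omega)
        refine ⟨w ++ [false], ?_⟩
        rw [matOf_append_singleton, if_neg Bool.false_ne_true, hw, Lmat_mul,
          show a + (c - a) = c from by ring, show b + (d - b) = d from by ring]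

/-- SL₂(ℤ≥0) is freely generated by L and R: every element is a product of
L's and R's in exactly one way. -/
theorem stmt0 (M : Matrix (Fin 2) (Fin 2) ℤ) (hM : SL2N M) :
    ∃! w : List Bool, matOf w = M := by
  obtain ⟨ha, hb, hc, hd, hdet⟩ := SL2N_elim _ _ _ _ (by rwa [← Matrix.eta_fin_two M])
  obtain ⟨w, hw⟩ := exists_word (M 0 0 + M 0 1 + M 1 0 + M 1 1).toNat _ _ _ _
    ha hb hc hd hdet le_rfl
  rw [← Matrix.eta_fin_two M] at hw
  exact ⟨w, hw, fun w' hw' => matOf_injective (by rw [hw, hw'])⟩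
end

section
/- The map sending a word w in the free monoid on two generators {L, R} to the rational f(φ(w)) = (a+b)/(c+d), where φ(w) = [[a,b],[c,d]] is the corresponding product of L = [[1,0],[1,1]] and R = [[1,1],[0,1]], is a bijection from such words onto the positive rationals. -/
open Matrix

def cwVal (M : Matrix (Fin 2) (Fin 2) ℤ) : ℚ :=
  ((M 0 0 + M 0 1 : ℤ) : ℚ) / ((M 1 0 + M 1 1 : ℤ) : ℚ)

/-!
Appending `R` to a word sends its value `x` to `x + 1`, appending `L` sends it to `x / (x + 1)`,
and the empty word has value `1`. Since `x + 1 > 1 > x / (x + 1)` for `x > 0`, the last letter of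
a word is read off its value and the value before it is recovered, which gives injectivity.
Conversely `p / q` is reached from `(p - q) / q` or from `p / (q - p)`, so descending on `p + q`
reaches every positive rational: this is the Calkin–Wilf tree.
-/

namespace CalkinWilf

def child (b : Bool) (x : ℚ) : ℚ :=
  if b then x + 1 else x / (x + 1)

theorem one_lt_child_true {x : ℚ} (hx : 0 < x) : 1 < child true x := by
  simp only [child, if_true]; linarith

theorem child_false_lt_one {x : ℚ} (hx : 0 < x) : child false x < 1 := by
  simp only [child, Bool.false_eq_true, if_false]
  rw [div_lt_one (by linarith)]; linarith

theorem child_ne_one (b : Bool) {x : ℚ} (hx : 0 < x) : child b x ≠ 1 := by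
  cases b
  · exact (child_false_lt_one hx).ne
  · exact (one_lt_child_true hx).ne'

theorem child_inj {b b' : Bool} {x y : ℚ} (hx : 0 < x) (hy : 0 < y)
    (h : child b x = child b' y) : b = b' ∧ x = y := by
  cases b <;> cases b'
  · refine ⟨rfl, ?_⟩
    simp only [child, Bool.false_eq_true, if_false] at h
    rw [div_eq_div_iff (by linarith) (by linarith)] at h
    linarith
  · exact absurd h ((child_false_lt_one hx).trans (one_lt_child_true hy)).ne
  · exact absurd h.symm ((child_false_lt_one hy).trans (one_lt_child_true hx)).ne
  · simp only [child, if_true, add_left_inj] at h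
    exact ⟨rfl, h⟩

theorem Rmat_mul (M : Matrix (Fin 2) (Fin 2) ℤ) :
    Rmat * M = !![M 0 0 + M 1 0, M 0 1 + M 1 1; M 1 0, M 1 1] := by
  rw [Rmat, M.eta_fin_two, Matrix.mul_fin_two]
  simp

theorem Lmat_mul (M : Matrix (Fin 2) (Fin 2) ℤ) :
    Lmat * M = !![M 0 0, M 0 1; M 0 0 + M 1 0, M 0 1 + M 1 1] := by
  rw [Lmat, M.eta_fin_two, Matrix.mul_fin_two]
  simp

theorem cwVal_Rmat_mul (M : Matrix (Fin 2) (Fin 2) ℤ) (h : M 1 0 + M 1 1 ≠ 0) :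
    cwVal (Rmat * M) = child true (cwVal M) := by
  have h' : ((M 1 0 + M 1 1 : ℤ) : ℚ) ≠ 0 := by exact_mod_cast h
  rw [child, if_pos rfl, cwVal, cwVal, div_add_one h', Rmat_mul]
  simp only [of_apply, cons_val', cons_val_zero, cons_val_fin_one, cons_val_one, Int.cast_add]
  ring

theorem cwVal_Lmat_mul (M : Matrix (Fin 2) (Fin 2) ℤ) (h : M 1 0 + M 1 1 ≠ 0) :
    cwVal (Lmat * M) = child false (cwVal M) := by
  have h' : ((M 1 0 + M 1 1 : ℤ) : ℚ) ≠ 0 := by exact_mod_cast h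
  rw [child, if_neg Bool.false_ne_true, cwVal, cwVal, div_add_one h',
    div_div_div_cancel_right₀ h', Lmat_mul]
  simp only [of_apply, cons_val', cons_val_zero, cons_val_fin_one, cons_val_one, Int.cast_add]
  ring

theorem matOf_append_singleton (w : List Bool) (b : Bool) :
    matOf (w ++ [b]) = (if b then Rmat else Lmat) * matOf w := by
  simp [matOf, List.foldl_append]

theorem rowSums_matOf_pos (w : List Bool) :
    0 < matOf w 0 0 + matOf w 0 1 ∧ 0 < matOf w 1 0 + matOf w 1 1 := by
  induction w using List.reverseRecOn with
  | nil => simp [matOf]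
  | append_singleton w b ih =>
    rw [matOf_append_singleton]
    cases b
    · simp only [Bool.false_eq_true, if_false, Lmat_mul, of_apply, cons_val', cons_val_zero,
        cons_val_fin_one, cons_val_one]
      omega
    · simp only [if_true, Rmat_mul, of_apply, cons_val', cons_val_zero, cons_val_fin_one,
        cons_val_one]
      omega

theorem cwVal_matOf_pos (w : List Bool) : 0 < cwVal (matOf w) := by
  obtain ⟨h₀, h₁⟩ := rowSums_matOf_pos w
  exact div_pos (by exact_mod_cast h₀) (by exact_mod_cast h₁)

theorem cwVal_matOf_nil : cwVal (matOf []) = 1 := by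
  simp [cwVal, matOf]

theorem cwVal_matOf_append_singleton (w : List Bool) (b : Bool) :
    cwVal (matOf (w ++ [b])) = child b (cwVal (matOf w)) := by
  have h := (rowSums_matOf_pos w).2.ne'
  rw [matOf_append_singleton]
  cases b
  · exact cwVal_Lmat_mul _ h
  · exact cwVal_Rmat_mul _ h

theorem cwVal_matOf_injective : Function.Injective fun w => cwVal (matOf w) := by
  intro v
  induction v using List.reverseRecOn with
  | nil =>
    intro w h
    rcases w.eq_nil_or_concat' with rfl | ⟨w, b, rfl⟩
    · rfl
    · simp only [cwVal_matOf_nil, cwVal_matOf_append_singleton] at h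
      exact absurd h.symm (child_ne_one b (cwVal_matOf_pos w))
  | append_singleton v b ih =>
    intro w h
    rcases w.eq_nil_or_concat' with rfl | ⟨w, b', rfl⟩
    · simp only [cwVal_matOf_nil, cwVal_matOf_append_singleton] at h
      exact absurd h (child_ne_one b (cwVal_matOf_pos v))
    · simp only [cwVal_matOf_append_singleton] at h
      obtain ⟨rfl, hvw⟩ := child_inj (cwVal_matOf_pos v) (cwVal_matOf_pos w) h
      rw [ih hvw]

theorem exists_cwVal_matOf_eq_div {p q : ℕ} (hp : 0 < p) (hq : 0 < q) :
    ∃ w, cwVal (matOf w) = p / q := by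
  induction hn : p + q using Nat.strong_induction_on generalizing p q with
  | _ n ih =>
  rcases lt_trichotomy p q with hpq | rfl | hqp
  · obtain ⟨w, hw⟩ := ih (p + (q - p)) (by omega) hp (Nat.sub_pos_of_lt hpq) rfl
    refine ⟨w ++ [false], ?_⟩
    have : ((q - p : ℕ) : ℚ) ≠ 0 := by exact_mod_cast (Nat.sub_pos_of_lt hpq).ne'
    rw [cwVal_matOf_append_singleton, hw, child, if_neg Bool.false_ne_true, div_add_one this,
      div_div_div_cancel_right₀ this, Nat.cast_sub hpq.le, add_sub_cancel]
  · exact ⟨[], by rw [cwVal_matOf_nil, div_self (by exact_mod_cast hp.ne')]⟩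
  · obtain ⟨w, hw⟩ := ih (p - q + q) (by omega) (Nat.sub_pos_of_lt hqp) hq rfl
    refine ⟨w ++ [true], ?_⟩
    have : (q : ℚ) ≠ 0 := by exact_mod_cast hq.ne'
    rw [cwVal_matOf_append_singleton, hw, child, if_pos rfl, Nat.cast_sub hqp.le, div_add_one this,
      sub_add_cancel]

end CalkinWilf

open CalkinWilf

/-- The map w ↦ (a+b)/(c+d) for matOf w = [[a,b],[c,d]] is a bijection from
words onto the positive rationals. -/
theorem stmt4 :
    (∀ w : List Bool, 0 < cwVal (matOf w)) ∧
    (∀ q : ℚ, 0 < q → ∃! w : List Bool, cwVal (matOf w) = q) := by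
  refine ⟨cwVal_matOf_pos, fun q hq => ?_⟩
  have hnum : 0 < q.num := Rat.num_pos.mpr hq
  obtain ⟨w, hw⟩ := exists_cwVal_matOf_eq_div (Int.lt_toNat.mpr hnum) q.den_pos
  have hnum' : ((q.num.toNat : ℕ) : ℚ) = q.num := by exact_mod_cast Int.toNat_of_nonneg hnum.le
  rw [hnum', Rat.num_div_den] at hw
  exact ⟨w, hw, fun v hv => cwVal_matOf_injective (hv.trans hw.symm)⟩
end

section
/- Backhouse–Ferreira theorem (Calkin–Wilf part): For every word w ∈ {0,1}*, writing M_w for the product of matrices obtained by reading w left to right and multiplying on the left by L = [[1,0],[1,1]] for 0 and R = [[1,1],[0,1]] for 1 starting from the identity, the rational (a+b)/(c+d) for M_w = [[a,b],[c,d]] equals the entry of the Calkin–Wilf tree at position w, where the Calkin–Wilf tree has root 1 and the node x has left child x/(1+x) and right child 1+x. -/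
open Matrix

/-- Descend through the Calkin–Wilf tree from value x along the word w
(ff = left child x/(1+x), tt = right child 1+x). -/
def cwFrom (x : ℚ) : List Bool → ℚ
  | [] => x
  | b :: w => cwFrom (if b then 1 + x else x / (1 + x)) w

lemma aux12 (w : List Bool) : ∀ M : Matrix (Fin 2) (Fin 2) ℤ,
    0 < M 0 0 + M 0 1 → 0 < M 1 0 + M 1 1 →
    cwVal (w.foldl (fun acc b => (if b then Rmat else Lmat) * acc) M)
      = cwFrom (cwVal M) w := by
  induction w with
  | nil => intro M h1 h2; rfl
  | cons b w ih =>
    intro M h1 h2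
    have ha : ((M 0 0 + M 0 1 : ℤ) : ℚ) > 0 := by exact_mod_cast h1
    have hb : ((M 1 0 + M 1 1 : ℤ) : ℚ) > 0 := by exact_mod_cast h2
    cases b
    · rw [List.foldl_cons, if_neg (by simp), cwFrom,
        ih (Lmat * M) (by simp [Lmat, Matrix.mul_apply, Fin.sum_univ_two]; omega)
          (by simp [Lmat, Matrix.mul_apply, Fin.sum_univ_two]; omega)]
      congr 1
      have hcd : ((M 1 0 : ℚ)) + M 1 1 ≠ 0 := by push_cast at hb; linarith
      have hs : ((M 0 0 : ℚ)) + M 0 1 + (M 1 0 + M 1 1) ≠ 0 := by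
        push_cast at ha hb; linarith
      simp only [cwVal, Lmat, Matrix.mul_apply, Fin.sum_univ_two]
      norm_num
      push_cast
      field_simp
      ring
    · rw [List.foldl_cons, if_pos (by simp), cwFrom,
        ih (Rmat * M) (by simp [Rmat, Matrix.mul_apply, Fin.sum_univ_two]; omega)
          (by simp [Rmat, Matrix.mul_apply, Fin.sum_univ_two]; omega)]
      congr 1
      have hcd : ((M 1 0 : ℚ)) + M 1 1 ≠ 0 := by push_cast at hb; linarith
      simp only [cwVal, Rmat, Matrix.mul_apply, Fin.sum_univ_two]
      norm_num
      push_cast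
      field_simp
      ring

theorem stmt12 (w : List Bool) : cwVal (matOf w) = cwFrom 1 w := by
  have := aux12 w 1 (by simp [Matrix.one_apply]) (by simp [Matrix.one_apply])
  rw [matOf, this]
  norm_num [cwVal, Matrix.one_apply]
end

section
/- Backhouse–Ferreira theorem (Farey part): For every word w ∈ {0,1}*, with M_w = [[a,b],[c,d]] defined by the matrix tree rule (root identity, left child L·M, right child R·M), the rational (d+b)/(c+a) equals the entry of the Stern–Brocot (Farey) tree at position w. -/
open Matrix

/-- One step of the Stern–Brocot bounds rule. -/
def sbStep (pr : (ℤ × ℤ) × (ℤ × ℤ)) (b : Bool) : (ℤ × ℤ) × (ℤ × ℤ) :=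
  let m := (pr.1.1 + pr.2.1, pr.1.2 + pr.2.2)
  if b then (m, pr.2) else (pr.1, m)

def sbBounds (w : List Bool) : (ℤ × ℤ) × (ℤ × ℤ) :=
  w.foldl sbStep ((0, 1), (1, 0))

/-- The Stern–Brocot value at position w: the mediant of the bounds. -/
def sbVal (w : List Bool) : ℚ :=
  (((sbBounds w).1.1 + (sbBounds w).2.1 : ℤ) : ℚ) /
    (((sbBounds w).1.2 + (sbBounds w).2.2 : ℤ) : ℚ)

def rel (M : Matrix (Fin 2) (Fin 2) ℤ) (pr : (ℤ × ℤ) × (ℤ × ℤ)) : Prop :=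
  M 0 0 = pr.1.2 ∧ M 0 1 = pr.1.1 ∧ M 1 0 = pr.2.2 ∧ M 1 1 = pr.2.1

lemma key (w : List Bool) : ∀ (M : Matrix (Fin 2) (Fin 2) ℤ) (pr : (ℤ × ℤ) × (ℤ × ℤ)),
    rel M pr →
    rel (w.foldl (fun acc b => (if b then Rmat else Lmat) * acc) M) (w.foldl sbStep pr) := by
  induction w with
  | nil => intro M pr h; exact h
  | cons b w ih =>
    intro M pr h
    obtain ⟨h1, h2, h3, h4⟩ := h
    simp only [List.foldl_cons]
    apply ih
    cases b <;>
      simp [sbStep, rel, Rmat, Lmat, Matrix.mul_apply, Fin.sum_univ_two, h1, h2, h3, h4]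

theorem stmt13 (w : List Bool) :
    ((matOf w 1 1 + matOf w 0 1 : ℤ) : ℚ) /
      ((matOf w 1 0 + matOf w 0 0 : ℤ) : ℚ) = sbVal w := by
  have h := key w 1 ((0, 1), (1, 0)) (by simp [rel, Matrix.one_apply])
  obtain ⟨h1, h2, h3, h4⟩ := h
  unfold matOf sbVal sbBounds
  rw [h1, h2, h3, h4]
  ring_nf
end

section
/- The Calkin–Wilf tree and the Stern–Brocot tree contain the same multiset of values at each level: the node values at depth n of the Stern–Brocot tree are a permutation of the node values at depth n of the Calkin–Wilf tree. -/
open Matrix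

/-! ### Auxiliary machinery -/

/-- positivity invariant on bounds pairs -/
def Good (pr : (ℤ × ℤ) × (ℤ × ℤ)) : Prop :=
  0 ≤ pr.1.1 ∧ 0 ≤ pr.1.2 ∧ 0 ≤ pr.2.1 ∧ 0 ≤ pr.2.2 ∧ 1 ≤ pr.1.2 + pr.2.2

lemma good_step (pr : (ℤ × ℤ) × (ℤ × ℤ)) (b : Bool) (h : Good pr) :
    Good (sbStep pr b) := by
  obtain ⟨h1, h2, h3, h4, h5⟩ := h
  cases b <;> simp [sbStep, Good] <;> constructor <;> omega

/-- Möbius-like action of a bounds pair -/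
noncomputable def gmob (pr : (ℤ × ℤ) × (ℤ × ℤ)) (y : ℚ) : ℚ :=
  ((pr.2.1 : ℚ) * y + (pr.1.1 : ℚ)) / ((pr.2.2 : ℚ) * y + (pr.1.2 : ℚ))

lemma cwFrom_pos (w : List Bool) (x : ℚ) (hx : 0 < x) : 0 < cwFrom x w := by
  induction w generalizing x with
  | nil => exact hx
  | cons b w ih =>
    cases b <;> simp only [cwFrom, reduceIte, Bool.false_eq_true]
    · exact ih _ (div_pos hx (by linarith))
    · exact ih _ (by linarith)

lemma cwFrom_append (x : ℚ) (l₁ l₂ : List Bool) :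
    cwFrom x (l₁ ++ l₂) = cwFrom (cwFrom x l₁) l₂ := by
  induction l₁ generalizing x with
  | nil => rfl
  | cons b w ih => simp only [List.cons_append, List.append_eq, cwFrom, ih]

lemma gmob_step (pr : (ℤ × ℤ) × (ℤ × ℤ)) (b : Bool) (y : ℚ) (hy : 0 < y) :
    gmob (sbStep pr b) y = gmob pr (if b then 1 + y else y / (1 + y)) := by
  have h1 : (1 : ℚ) + y ≠ 0 := by linarith
  cases b <;>
    simp only [sbStep, gmob, reduceIte, Bool.false_eq_true] <;> push_cast
  · rw [show ((pr.2.1 : ℚ) * (y / (1 + y)) + (pr.1.1 : ℚ))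
        = ((pr.2.1 : ℚ) * y + (pr.1.1 : ℚ) * (1 + y)) / (1 + y) by
          field_simp,
      show ((pr.2.2 : ℚ) * (y / (1 + y)) + (pr.1.2 : ℚ))
        = ((pr.2.2 : ℚ) * y + (pr.1.2 : ℚ) * (1 + y)) / (1 + y) by
          field_simp,
      div_div_div_cancel_right₀ h1]
    congr 1 <;> ring
  · congr 1 <;> ring

/-- Key lemma: Stern–Brocot mediant value equals Calkin–Wilf value of reversed word. -/
lemma key_s14 (w : List Bool) : ∀ pr : (ℤ × ℤ) × (ℤ × ℤ), Good pr →
    ((((w.foldl sbStep pr).1.1 + (w.foldl sbStep pr).2.1 : ℤ) : ℚ) /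
      (((w.foldl sbStep pr).1.2 + (w.foldl sbStep pr).2.2 : ℤ) : ℚ))
      = gmob pr (cwFrom 1 w.reverse) := by
  induction w with
  | nil => intro pr h; simp [gmob, cwFrom]; ring_nf
  | cons b u ih =>
    intro pr h
    have hy : 0 < cwFrom 1 u.reverse := cwFrom_pos _ _ one_pos
    rw [List.foldl_cons, ih _ (good_step pr b h), List.reverse_cons,
      cwFrom_append, gmob_step pr b _ hy]
    cases b <;> simp [cwFrom]

lemma sb_eq_cw_rev (w : List Bool) : sbVal w = cwFrom 1 w.reverse := by
  have h := key_s14 w ((0, 1), (1, 0)) (by simp [Good])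
  have hy : 0 < cwFrom 1 w.reverse := cwFrom_pos _ _ one_pos
  rw [sbVal, sbBounds, h, gmob]
  push_cast
  rw [one_mul, zero_mul, add_zero, zero_add, div_one]

lemma ofFn_rev (n : ℕ) (f : Fin n → Bool) :
    (List.ofFn f).reverse = List.ofFn (fun i => f i.rev) := by
  apply List.ext_getElem
  · simp
  · intro i h1 h2
    simp only [List.getElem_reverse, List.getElem_ofFn, List.length_ofFn] at *
    congr 1
    ext
    simp [Fin.rev]
    omega

def revEquiv (n : ℕ) : (Fin n → Bool) ≃ (Fin n → Bool) where
  toFun f := fun i => f i.rev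
  invFun f := fun i => f i.rev
  left_inv f := by ext i; simp
  right_inv f := by ext i; simp

/-- At every depth n, the Stern–Brocot values are a permutation of the
Calkin–Wilf values. -/
theorem stmt14 (n : ℕ) :
    (Finset.univ : Finset (Fin n → Bool)).val.map
        (fun f => sbVal (List.ofFn f)) =
      (Finset.univ : Finset (Fin n → Bool)).val.map
        (fun f => cwFrom 1 (List.ofFn f)) := by
  calc (Finset.univ : Finset (Fin n → Bool)).val.map (fun f => sbVal (List.ofFn f))
      = (Finset.univ : Finset (Fin n → Bool)).val.map
          (fun f => cwFrom 1 (List.ofFn (fun i => f i.rev))) := by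
        apply Multiset.map_congr rfl
        intro f _
        rw [sb_eq_cw_rev, ofFn_rev]
    _ = ((Finset.univ : Finset (Fin n → Bool)).map (revEquiv n).toEmbedding).val.map
          (fun f => cwFrom 1 (List.ofFn f)) := by
        rw [Finset.map_val, Multiset.map_map]
        rfl
    _ = (Finset.univ : Finset (Fin n → Bool)).val.map
          (fun f => cwFrom 1 (List.ofFn f)) := by
        rw [Finset.map_univ_equiv]
end
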